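/- Let ε ∈ (0, 0.01) and δ = ε/4. Let Ψ be a Max-2OR instance with m_1 1-clauses and m_2 2-clauses, and let B be a real number with (1−δ)·bias(Ψ) ≤ B ≤ (1+δ)·bias(Ψ). Define v = (1−δ)²·(2m_1 + 3m_2 + B²/m_2)/4 if B ≤ (1−δ)·m_2 (with B²/m_2 interpreted as 0 when m_2 = 0), and v = (1−δ)·(m_1 + m_2 + B)/2 otherwise. Then v ≤ val_Ψ and v ≥ (√2/2 − ε)·val_Ψ. (Correctness analysis of Algorithm 3 in Theorem 3.8, the (√2/2 − ε)-approximation for Max-2OR.) -/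

import Mathlib

/-!
Write `w(v, b) = 2 pos⁽¹⁾ + pos⁽²⁾` (resp. with `neg`) for the weighted number of occurrences of
a literal, so that `bias = ½ Σ_v |w(v, 1) - w(v, 0)|`.

Upper bounds: trivially `val ≤ m₁ + m₂`; and a clause satisfied by `σ` contains at least one
true literal, so counting true literals of an optimal `σ` gives `2 val ≤ m₁ + 2 m₂ + bias`.

Lower bounds: set every variable independently to its majority value with probability `½ + t`,
`0 ≤ t ≤ ½`. A 1-clause is satisfied with probability `½ ± t` and a 2-clause with probability
at least `¾ - t² ± t/2 ± t/2`, the signs adding up over all clauses to `t · bias`; hence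
`m₁/2 + (¾ - t²) m₂ + t · bias ≤ val`. Taking `t = ½` and, when `bias ≤ m₂`, `t = bias/(2 m₂)`
gives `(m₁ + m₂ + bias)/2 ≤ val` and `m₁/2 + 3m₂/4 + bias²/(4 m₂) ≤ val`.

In each branch of the algorithm the output `v` lies between `(1 - ε) X` and `X` for the
corresponding lower bound `X`, and the upper bounds give `(√2/2) val ≤ X`.
-/

/-- A `Max-2OR` clause: either a 1-clause (a single literal) or a 2-clause
(disjunction of two literals on distinct variables). A literal on variable `i`
with polarity `b` (`b = true` for `xᵢ`, `b = false` for `¬xᵢ`) evaluates to `σ i == b`. -/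
inductive OrClause (n : ℕ) where
  | one (i : Fin n) (b : Bool)
  | two (i : Fin n) (bi : Bool) (j : Fin n) (bj : Bool) (hij : i ≠ j)

/-- Evaluation of a clause under an assignment. -/
def OrClause.eval {n : ℕ} (σ : Fin n → Bool) : OrClause n → Bool
  | .one i b => σ i == b
  | .two i bi j bj _ => (σ i == bi) || (σ j == bj)

/-- Whether a clause is a 1-clause. -/
def OrClause.isOne {n : ℕ} : OrClause n → Bool
  | .one _ _ => true
  | .two _ _ _ _ _ => false

/-- `m₁`: the number of 1-clauses. -/
def numOne {n : ℕ} (Ψ : List (OrClause n)) : ℕ := Ψ.countP OrClause.isOne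

/-- `m₂`: the number of 2-clauses. -/
def numTwo {n : ℕ} (Ψ : List (OrClause n)) : ℕ := Ψ.countP (fun C => !C.isOne)

/-- The number of clauses of `Ψ` satisfied by `σ`, i.e. `val_Ψ(σ)`. -/
def satCount {n : ℕ} (Ψ : List (OrClause n)) (σ : Fin n → Bool) : ℕ :=
  Ψ.countP (fun C => C.eval σ)

/-- `val_Ψ`: the maximum number of simultaneously satisfiable clauses. -/
def maxVal {n : ℕ} (Ψ : List (OrClause n)) : ℕ :=
  Finset.univ.sup (fun σ : Fin n → Bool => satCount Ψ σ)

/-- `pos_i^{(1)}(Ψ)`: the number of 1-clauses containing the literal `xᵢ`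
(`negᵢ^{(1)}` for `¬xᵢ`, according to polarity `b`). -/
def cnt1 {n : ℕ} (Ψ : List (OrClause n)) (v : Fin n) (b : Bool) : ℕ :=
  (Ψ.map (fun C => match C with
    | .one i b' => if i = v ∧ b' = b then 1 else 0
    | .two _ _ _ _ _ => 0)).sum

/-- `pos_i^{(2)}(Ψ)`: the number of 2-clauses containing the literal `xᵢ`
(`negᵢ^{(2)}` for `¬xᵢ`, according to polarity `b`). -/
def cnt2 {n : ℕ} (Ψ : List (OrClause n)) (v : Fin n) (b : Bool) : ℕ :=
  (Ψ.map (fun C => match C with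
    | .one _ _ => 0
    | .two i bi j bj _ => (if i = v ∧ bi = b then 1 else 0)
                        + (if j = v ∧ bj = b then 1 else 0))).sum

/-- `bias(Ψ) = (1/2) Σᵢ |2 posᵢ⁽¹⁾ + posᵢ⁽²⁾ − 2 negᵢ⁽¹⁾ − negᵢ⁽²⁾|`. -/
noncomputable def bias {n : ℕ} (Ψ : List (OrClause n)) : ℝ :=
  (1/2) * ∑ v : Fin n,
    |2 * (cnt1 Ψ v true : ℝ) + (cnt2 Ψ v true : ℝ)
      - 2 * (cnt1 Ψ v false : ℝ) - (cnt2 Ψ v false : ℝ)|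

section ProductWeights

variable {ι α : Type*} [Fintype ι] [DecidableEq ι] [Fintype α]

theorem sum_prod_mul_prod_eq (p : ι → α → ℝ) (hp : ∀ i, ∑ a, p i a = 1) (s : Finset ι)
    (f : ι → α → ℝ) :
    ∑ σ : ι → α, (∏ i, p i (σ i)) * ∏ i ∈ s, f i (σ i) = ∏ i ∈ s, ∑ a, p i a * f i a := by
  have hext : ∀ σ : ι → α, ∏ i ∈ s, f i (σ i) = ∏ i, if i ∈ s then f i (σ i) else 1 :=
    fun σ => by rw [Finset.prod_ite_mem, Finset.univ_inter]
  have hfactor : ∀ i, (∑ a, p i a * if i ∈ s then f i a else 1)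
      = if i ∈ s then ∑ a, p i a * f i a else 1 := fun i => by
    split_ifs <;> simp [hp]
  simp_rw [hext, ← Finset.prod_mul_distrib]
  rw [← Fintype.prod_sum (fun i a => p i a * if i ∈ s then f i a else 1)]
  simp_rw [hfactor]
  rw [Finset.prod_ite_mem, Finset.univ_inter]

theorem sum_prod_eq_one (p : ι → α → ℝ) (hp : ∀ i, ∑ a, p i a = 1) :
    ∑ σ : ι → α, ∏ i, p i (σ i) = 1 := by
  simpa using sum_prod_mul_prod_eq p hp ∅ fun _ _ => 1

end ProductWeights

theorem cast_countP_eq_sum_map {α : Type*} (l : List α) (p : α → Bool) :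
    (l.countP p : ℝ) = (l.map fun a => if p a then 1 else 0).sum := by
  induction l with
  | nil => simp
  | cons a l ih => by_cases h : p a <;> simp [h, ih, add_comm]

namespace OrClause

variable {n : ℕ}

/-- The literal of a 1-clause counts twice, matching the weights `2 pos⁽¹⁾ + pos⁽²⁾` of `bias`. -/
def litSum (g : Fin n → Bool → ℝ) : OrClause n → ℝ
  | one i b => 2 * g i b
  | two i bi j bj _ => g i bi + g j bj

/-- The probability that the clause is satisfied when each `σ v` is drawn independently
with `P(σ v = b) = p v b`. -/
def satProb (p : Fin n → Bool → ℝ) : OrClause n → ℝ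
  | one i b => p i b
  | two i bi j bj _ => 1 - p i (!bi) * p j (!bj)

end OrClause

open Finset OrClause

variable {n : ℕ}

noncomputable def litWeight (Ψ : List (OrClause n)) (v : Fin n) (b : Bool) : ℝ :=
  2 * cnt1 Ψ v b + cnt2 Ψ v b

theorem litWeight_nil (v : Fin n) (b : Bool) : litWeight [] v b = 0 := by
  simp [litWeight, cnt1, cnt2]

theorem litWeight_cons_one (Ψ : List (OrClause n)) (i v : Fin n) (b' b : Bool) :
    litWeight (one i b' :: Ψ) v b = (if i = v ∧ b' = b then 2 else 0) + litWeight Ψ v b := by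
  have h₁ : cnt1 (one i b' :: Ψ) v b = (if i = v ∧ b' = b then 1 else 0) + cnt1 Ψ v b := rfl
  have h₂ : cnt2 (one i b' :: Ψ) v b = cnt2 Ψ v b := by simp [cnt2]
  rw [litWeight, litWeight, h₁, h₂]
  split_ifs <;> push_cast <;> ring

theorem litWeight_cons_two (Ψ : List (OrClause n)) (i j v : Fin n) (bi bj b : Bool)
    (hij : i ≠ j) :
    litWeight (two i bi j bj hij :: Ψ) v b =
      (if i = v ∧ bi = b then 1 else 0) + (if j = v ∧ bj = b then 1 else 0)
        + litWeight Ψ v b := by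
  have h₁ : cnt1 (two i bi j bj hij :: Ψ) v b = cnt1 Ψ v b := by simp [cnt1]
  have h₂ : cnt2 (two i bi j bj hij :: Ψ) v b =
      (if i = v ∧ bi = b then 1 else 0) + (if j = v ∧ bj = b then 1 else 0) + cnt2 Ψ v b := rfl
  rw [litWeight, litWeight, h₁, h₂]
  split_ifs <;> push_cast <;> ring

theorem sum_map_litSum (Ψ : List (OrClause n)) (g : Fin n → Bool → ℝ) :
    (Ψ.map (litSum g)).sum = ∑ v, ∑ b, g v b * litWeight Ψ v b := by
  induction Ψ with
  | nil => simp [litWeight_nil]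
  | cons C Ψ ih =>
    rw [List.map_cons, List.sum_cons, ih]
    cases C with
    | one i b =>
      simp [litWeight_cons_one, litSum, mul_add, Finset.sum_add_distrib, ite_and, mul_comm]
    | two i bi j bj _ =>
      simp [litWeight_cons_two, litSum, mul_add, Finset.sum_add_distrib, ite_and]

theorem bias_eq (Ψ : List (OrClause n)) :
    bias Ψ = 1 / 2 * ∑ v, |litWeight Ψ v true - litWeight Ψ v false| := by
  simp only [bias, litWeight]
  congr 2 with v
  ring_nf

theorem bias_nonneg (Ψ : List (OrClause n)) : 0 ≤ bias Ψ := by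
  rw [bias_eq]
  positivity

def agreeSign (σ : Fin n → Bool) (v : Fin n) (b : Bool) : ℝ := if σ v = b then 1 else -1

theorem agreeSign_not (σ : Fin n → Bool) (v : Fin n) (b : Bool) :
    agreeSign σ v (!b) = -agreeSign σ v b := by
  cases b <;> cases h : σ v <;> simp [agreeSign, h]

noncomputable def majority (Ψ : List (OrClause n)) (v : Fin n) : Bool :=
  decide (litWeight Ψ v false ≤ litWeight Ψ v true)

theorem sum_agreeSign_mul_litWeight_le (Ψ : List (OrClause n)) (σ : Fin n → Bool) (v : Fin n) :
    ∑ b, agreeSign σ v b * litWeight Ψ v b ≤ |litWeight Ψ v true - litWeight Ψ v false| := by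
  rw [Fintype.sum_bool, agreeSign, agreeSign]
  have := abs_le.1 (le_refl |litWeight Ψ v true - litWeight Ψ v false|)
  cases σ v <;> simp <;> linarith

theorem sum_agreeSign_majority_mul_litWeight (Ψ : List (OrClause n)) (v : Fin n) :
    ∑ b, agreeSign (majority Ψ) v b * litWeight Ψ v b
      = |litWeight Ψ v true - litWeight Ψ v false| := by
  rw [Fintype.sum_bool]
  by_cases h : litWeight Ψ v false ≤ litWeight Ψ v true
  · simp [agreeSign, majority, h, abs_of_nonneg (sub_nonneg.2 h)]
    ring
  · simp [agreeSign, majority, h, abs_of_neg (sub_neg.2 (not_le.1 h))]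
    ring

theorem sum_map_litSum_agreeSign_le (Ψ : List (OrClause n)) (σ : Fin n → Bool) :
    (Ψ.map (litSum (agreeSign σ))).sum ≤ 2 * bias Ψ := by
  rw [sum_map_litSum, bias_eq, ← mul_assoc, mul_one_div_cancel two_ne_zero, one_mul]
  exact Finset.sum_le_sum fun v _ => sum_agreeSign_mul_litWeight_le Ψ σ v

theorem sum_map_litSum_agreeSign_majority (Ψ : List (OrClause n)) :
    (Ψ.map (litSum (agreeSign (majority Ψ)))).sum = 2 * bias Ψ := by
  rw [sum_map_litSum, bias_eq]
  simp only [sum_agreeSign_majority_mul_litWeight]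
  ring

theorem sum_map_ite_isOne (Ψ : List (OrClause n)) (a c : ℝ) :
    (Ψ.map fun C => if C.isOne then a else c).sum = a * numOne Ψ + c * numTwo Ψ := by
  induction Ψ with
  | nil => simp [numOne, numTwo]
  | cons C Ψ ih =>
    cases C <;> simp [numOne, numTwo, List.countP_cons, isOne] at ih ⊢ <;> rw [ih] <;> ring

theorem satCount_eq_sum_map (Ψ : List (OrClause n)) (σ : Fin n → Bool) :
    (satCount Ψ σ : ℝ) = (Ψ.map fun C => if C.eval σ then 1 else 0).sum :=
  cast_countP_eq_sum_map Ψ _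

theorem satCount_le_maxVal (Ψ : List (OrClause n)) (σ : Fin n → Bool) :
    satCount Ψ σ ≤ maxVal Ψ :=
  Finset.le_sup (Finset.mem_univ σ)

theorem exists_satCount_eq_maxVal (Ψ : List (OrClause n)) : ∃ σ, satCount Ψ σ = maxVal Ψ := by
  obtain ⟨σ, -, h⟩ := Finset.exists_mem_eq_sup univ univ_nonempty (satCount Ψ)
  exact ⟨σ, h.symm⟩

theorem maxVal_le_numOne_add_numTwo (Ψ : List (OrClause n)) :
    (maxVal Ψ : ℝ) ≤ numOne Ψ + numTwo Ψ := by
  have hlen : numOne Ψ + numTwo Ψ = Ψ.length := by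
    rw [numOne, numTwo, List.length_eq_countP_add_countP isOne]
    simp
  exact_mod_cast hlen ▸ Finset.sup_le fun σ _ => List.countP_le_length

theorem four_mul_sat_le (σ : Fin n → Bool) (C : OrClause n) :
    4 * (if C.eval σ then 1 else 0 : ℝ) ≤ litSum (agreeSign σ) C + if C.isOne then 2 else 4 := by
  cases C with
  | one i b =>
    by_cases h : σ i = b <;> norm_num [eval, litSum, agreeSign, isOne, h]
  | two i bi j bj _ =>
    by_cases hi : σ i = bi <;> by_cases hj : σ j = bj <;>
      norm_num [eval, litSum, agreeSign, isOne, hi, hj]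

theorem two_mul_maxVal_le (Ψ : List (OrClause n)) :
    2 * (maxVal Ψ : ℝ) ≤ numOne Ψ + 2 * numTwo Ψ + bias Ψ := by
  obtain ⟨σ, hσ⟩ := exists_satCount_eq_maxVal Ψ
  have hsum : 4 * (satCount Ψ σ : ℝ)
      ≤ (Ψ.map (litSum (agreeSign σ))).sum + (2 * numOne Ψ + 4 * numTwo Ψ) := by
    rw [satCount_eq_sum_map, ← sum_map_ite_isOne, ← List.sum_map_mul_left, ← List.sum_map_add]
    exact List.sum_le_sum fun C _ => four_mul_sat_le σ C
  have := sum_map_litSum_agreeSign_le Ψ σ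
  rw [hσ] at hsum
  linarith

theorem sum_prod_mul_sat (p : Fin n → Bool → ℝ) (hp : ∀ v, ∑ b, p v b = 1) (C : OrClause n) :
    ∑ σ : Fin n → Bool, (∏ v, p v (σ v)) * (if C.eval σ then 1 else 0) = C.satProb p := by
  cases C with
  | one i b =>
    have h := sum_prod_mul_prod_eq p hp {i} fun _ x => if x = b then 1 else 0
    simpa [eval, satProb] using h
  | two i bi j bj hij =>
    have h := sum_prod_mul_prod_eq p hp {i, j}
      fun v x => if x = (if v = i then bi else bj) then 0 else 1
    have hind : ∀ σ : Fin n → Bool, (if (two i bi j bj hij).eval σ then 1 else 0 : ℝ)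
        = 1 - ∏ v ∈ {i, j}, (if σ v = (if v = i then bi else bj) then 0 else 1 : ℝ) :=
      fun σ => by
        rw [Finset.prod_pair hij]
        by_cases hi : σ i = bi <;> by_cases hj : σ j = bj <;>
          simp [eval, hi, hj, hij.symm]
    simp_rw [hind, mul_sub, mul_one, Finset.sum_sub_distrib, sum_prod_eq_one p hp, h,
      Finset.prod_pair hij]
    cases bi <;> cases bj <;> simp [satProb, hij.symm]

theorem sum_map_satProb_le_maxVal (Ψ : List (OrClause n)) (p : Fin n → Bool → ℝ)
    (hp₀ : ∀ v b, 0 ≤ p v b) (hp : ∀ v, ∑ b, p v b = 1) :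
    (Ψ.map (satProb p)).sum ≤ maxVal Ψ := by
  have hswap : (Ψ.map (satProb p)).sum
      = ∑ σ : Fin n → Bool, (∏ v, p v (σ v)) * satCount Ψ σ := by
    rw [List.map_congr_left fun C _ => (sum_prod_mul_sat p hp C).symm]
    simp_rw [satCount_eq_sum_map, ← List.sum_map_mul_left]
    simpa using Multiset.sum_map_sum (m := (Ψ : Multiset (OrClause n))) (s := univ)
      (f := fun C σ => (∏ v, p v (σ v)) * (if C.eval σ then 1 else 0 : ℝ))
  calc (Ψ.map (satProb p)).sum
      = ∑ σ : Fin n → Bool, (∏ v, p v (σ v)) * satCount Ψ σ := hswap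
    _ ≤ ∑ σ : Fin n → Bool, (∏ v, p v (σ v)) * maxVal Ψ := by
      gcongr with σ
      · exact Finset.prod_nonneg fun v _ => hp₀ v _
      · exact_mod_cast satCount_le_maxVal Ψ σ
    _ = maxVal Ψ := by rw [← Finset.sum_mul, sum_prod_eq_one p hp, one_mul]

theorem satProb_ge (σ₀ : Fin n → Bool) (t : ℝ) (C : OrClause n) :
    (if C.isOne then 1 / 2 else 3 / 4 - t ^ 2) + t / 2 * litSum (agreeSign σ₀) C
      ≤ C.satProb fun v b => 1 / 2 + t * agreeSign σ₀ v b := by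
  cases C with
  | one i b => simp only [isOne, satProb, litSum, if_true]; linarith
  | two i bi j bj _ =>
    simp only [isOne, satProb, litSum, agreeSign_not, Bool.false_eq_true, if_false]
    have hprod : agreeSign σ₀ i bi * agreeSign σ₀ j bj ≤ 1 := by
      unfold agreeSign; split_ifs <;> norm_num
    nlinarith [mul_le_mul_of_nonneg_left hprod (sq_nonneg t)]

/-- Each variable takes its majority value with probability `1/2 + t`. -/
theorem randomized_majority_le_maxVal {Ψ : List (OrClause n)} {t : ℝ} (ht₀ : 0 ≤ t)
    (ht₁ : t ≤ 1 / 2) :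
    numOne Ψ / 2 + (3 / 4 - t ^ 2) * numTwo Ψ + t * bias Ψ ≤ maxVal Ψ := by
  set p : Fin n → Bool → ℝ := fun v b => 1 / 2 + t * agreeSign (majority Ψ) v b
  have hp₀ : ∀ v b, 0 ≤ p v b := fun v b => by
    have : -1 ≤ agreeSign (majority Ψ) v b := by unfold agreeSign; split_ifs <;> norm_num
    simp only [p]
    nlinarith
  have hp : ∀ v, ∑ b, p v b = 1 := fun v => by
    simp only [p, Fintype.sum_bool, ← Bool.not_false, agreeSign_not]
    ring
  calc numOne Ψ / 2 + (3 / 4 - t ^ 2) * numTwo Ψ + t * bias Ψ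
      = (Ψ.map fun C => (if C.isOne then 1 / 2 else 3 / 4 - t ^ 2)
          + t / 2 * litSum (agreeSign (majority Ψ)) C).sum := by
        rw [List.sum_map_add, sum_map_ite_isOne, List.sum_map_mul_left,
          sum_map_litSum_agreeSign_majority]
        ring
    _ ≤ (Ψ.map (satProb p)).sum := List.sum_le_sum fun C _ => satProb_ge _ t C
    _ ≤ maxVal Ψ := sum_map_satProb_le_maxVal Ψ p hp₀ hp

theorem quadratic_le_maxVal {Ψ : List (OrClause n)} (h : bias Ψ ≤ numTwo Ψ) :
    numOne Ψ / 2 + 3 * numTwo Ψ / 4 + bias Ψ ^ 2 / (4 * numTwo Ψ) ≤ maxVal Ψ := by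
  rcases (Nat.cast_nonneg (numTwo Ψ) : (0 : ℝ) ≤ numTwo Ψ).eq_or_lt with h₀ | h₀
  · simpa [← h₀] using randomized_majority_le_maxVal (Ψ := Ψ) le_rfl (by norm_num)
  · -- `t = bias / (2 m₂)` maximises the bound of `randomized_majority_le_maxVal`
    have ht : bias Ψ / (2 * numTwo Ψ) ≤ 1 / 2 := by
      rw [div_le_iff₀ (by positivity)]; linarith
    convert randomized_majority_le_maxVal (div_nonneg (bias_nonneg Ψ) (by positivity)) ht using 1
    field_simp
    ring

theorem approx_of_sandwich {X V v ε : ℝ} (hε : 0 ≤ ε) (hXV : X ≤ V) (hVX : √2 / 2 * V ≤ X)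
    (hlo : (1 - ε) * X ≤ v) (hhi : v ≤ X) : v ≤ V ∧ (√2 / 2 - ε) * V ≤ v :=
  ⟨hhi.trans hXV, by nlinarith [mul_le_mul_of_nonneg_left hXV hε]⟩

theorem quadratic_sandwich {m₁ m₂ b B δ : ℝ} (hm₁ : 0 ≤ m₁) (hm₂ : 0 ≤ m₂) (hb : 0 ≤ b)
    (hδ₀ : 0 ≤ δ) (hδ₁ : δ ≤ 1) (hB₁ : (1 - δ) * b ≤ B) (hB₂ : B ≤ (1 + δ) * b) :
    (1 - 4 * δ) * (m₁ / 2 + 3 * m₂ / 4 + b ^ 2 / (4 * m₂))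
        ≤ (1 - δ) ^ 2 * (2 * m₁ + 3 * m₂ + B ^ 2 / m₂) / 4 ∧
      (1 - δ) ^ 2 * (2 * m₁ + 3 * m₂ + B ^ 2 / m₂) / 4
        ≤ m₁ / 2 + 3 * m₂ / 4 + b ^ 2 / (4 * m₂) := by
  have hB : 0 ≤ B := (mul_nonneg (by linarith) hb).trans hB₁
  have hsq₁ : ((1 - δ) * b) ^ 2 ≤ B ^ 2 := pow_le_pow_left₀ (mul_nonneg (by linarith) hb) hB₁ 2
  have hsq₂ : B ^ 2 ≤ ((1 + δ) * b) ^ 2 := pow_le_pow_left₀ hB hB₂ 2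
  have hc : 0 ≤ (1 - δ) ^ 2 ∧ (1 - δ) ^ 2 ≤ 1 := ⟨sq_nonneg _, by nlinarith⟩
  have hbern : 1 - 4 * δ ≤ (1 - δ) ^ 4 := by nlinarith [sq_nonneg δ, sq_nonneg (δ * (1 - δ))]
  have hlow : (1 - 4 * δ) * b ^ 2 ≤ (1 - δ) ^ 2 * B ^ 2 := by
    nlinarith [mul_le_mul_of_nonneg_left hsq₁ hc.1, mul_le_mul_of_nonneg_right hbern (sq_nonneg b)]
  have hhigh : (1 - δ) ^ 2 * B ^ 2 ≤ b ^ 2 := by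
    nlinarith [mul_le_mul_of_nonneg_left hsq₂ hc.1, mul_nonneg (sq_nonneg δ) (sq_nonneg b),
      mul_nonneg (mul_nonneg (sq_nonneg δ) (sq_nonneg δ)) (sq_nonneg b)]
  have hdiv : b ^ 2 / (4 * m₂) = b ^ 2 / m₂ / 4 := by rw [div_div, mul_comm]
  have hZlow : (1 - 4 * δ) * (b ^ 2 / m₂) ≤ (1 - δ) ^ 2 * (B ^ 2 / m₂) := by
    simpa only [mul_div_assoc] using div_le_div_of_nonneg_right hlow hm₂
  have hZhigh : (1 - δ) ^ 2 * (B ^ 2 / m₂) ≤ b ^ 2 / m₂ := by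
    simpa only [mul_div_assoc] using div_le_div_of_nonneg_right hhigh hm₂
  have hlin : 0 ≤ 2 * m₁ + 3 * m₂ := by linarith
  rw [hdiv]
  constructor
  · nlinarith [mul_le_mul_of_nonneg_right (show 1 - 4 * δ ≤ (1 - δ) ^ 2 by nlinarith) hlin]
  · nlinarith [mul_le_mul_of_nonneg_right hc.2 hlin]

theorem linear_sandwich {m₁ m₂ b B δ : ℝ} (hm₁ : 0 ≤ m₁) (hm₂ : 0 ≤ m₂) (hb : 0 ≤ b)
    (hδ₀ : 0 ≤ δ) (hδ₁ : δ ≤ 1) (hB₁ : (1 - δ) * b ≤ B) (hB₂ : B ≤ (1 + δ) * b) :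
    (1 - 4 * δ) * ((m₁ + m₂ + b) / 2) ≤ (1 - δ) * (m₁ + m₂ + B) / 2 ∧
      (1 - δ) * (m₁ + m₂ + B) / 2 ≤ (m₁ + m₂ + b) / 2 := by
  constructor
  · nlinarith [mul_le_mul_of_nonneg_left hB₁ (sub_nonneg.2 hδ₁), mul_nonneg hδ₀ hb,
      mul_nonneg (sq_nonneg δ) hb, mul_nonneg hδ₀ (add_nonneg hm₁ hm₂)]
  · nlinarith [mul_le_mul_of_nonneg_left hB₂ (sub_nonneg.2 hδ₁), mul_nonneg (sq_nonneg δ) hb,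
      mul_nonneg hδ₀ (add_nonneg hm₁ hm₂)]

theorem sqrt_two_half_mul_le_quadratic {m₁ m₂ b V : ℝ} (hb : 0 ≤ b) (hbm : b ≤ m₂)
    (hU₁ : V ≤ m₁ + m₂) (hU₂ : 2 * V ≤ m₁ + 2 * m₂ + b) :
    √2 / 2 * V ≤ m₁ / 2 + 3 * m₂ / 4 + b ^ 2 / (4 * m₂) := by
  have hs : √2 ^ 2 = 2 := Real.sq_sqrt zero_le_two
  have hs₁ : 1 ≤ √2 := by nlinarith [Real.sqrt_nonneg 2]
  have hs₂ : √2 ≤ 2 := by nlinarith [Real.sqrt_nonneg 2]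
  rcases (hb.trans hbm).eq_or_lt with hm₂ | hm₂
  · subst hm₂
    have : b = 0 := le_antisymm hbm hb
    subst this
    simp only [div_zero, mul_zero, add_zero, zero_div]
    nlinarith
  · rw [← sub_nonneg]
    -- After using `hU₂` (if `b ≤ m₁`) or `hU₁` (if `m₁ ≤ b`), the remainder is
    -- `((√2 - 1) m₂ - b)² + (2 - √2) m₂ (m₁ - b)`, resp. `... + 2 (√2 - 1) m₂ (b - m₁)`.
    have key : 0 ≤ 2 * m₁ * m₂ + 3 * m₂ ^ 2 + b ^ 2 - 2 * √2 * V * m₂ := by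
      have hsq := sq_nonneg ((√2 - 1) * m₂ - b)
      have hsm : 0 ≤ √2 * m₂ := mul_nonneg (Real.sqrt_nonneg 2) hm₂.le
      rcases le_total b m₁ with h | h
      · nlinarith [mul_le_mul_of_nonneg_left hU₂ hsm,
          mul_nonneg (mul_nonneg (sub_nonneg.2 hs₂) hm₂.le) (sub_nonneg.2 h)]
      · nlinarith [mul_le_mul_of_nonneg_left hU₁ hsm,
          mul_nonneg (mul_nonneg (sub_nonneg.2 hs₁) hm₂.le) (sub_nonneg.2 h)]
    have : m₁ / 2 + 3 * m₂ / 4 + b ^ 2 / (4 * m₂) - √2 / 2 * V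
        = (2 * m₁ * m₂ + 3 * m₂ ^ 2 + b ^ 2 - 2 * √2 * V * m₂) / (4 * m₂) := by
      field_simp
      ring
    rw [this]
    positivity

theorem sqrt_two_half_mul_le_linear {m₁ m₂ b V : ℝ} (hm₂ : 0 ≤ m₂) (hbm : 99 * m₂ ≤ 100 * b)
    (hL : m₁ / 2 + 3 * m₂ / 4 ≤ V) (hU₁ : V ≤ m₁ + m₂) (hU₂ : 2 * V ≤ m₁ + 2 * m₂ + b) :
    √2 / 2 * V ≤ (m₁ + m₂ + b) / 2 := by
  have hs : √2 < 1.49 := by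
    rw [Real.sqrt_lt' (by norm_num)]; norm_num
  have hV : 0 ≤ V := by linarith
  -- `3V ≤ 2(m₁ + m₂ + b) + (m₂ - b)`, with `m₂ - b ≤ m₂/100` and `m₂ ≤ 4V/3`
  have : 1.49 * V ≤ m₁ + m₂ + b := by linarith
  nlinarith [mul_le_mul_of_nonneg_right hs.le hV]

/-- Correctness analysis of Algorithm 3 (Theorem 3.8): the `(√2/2 − ε)`-approximation
for `Max-2OR`. Given `B ∈ (1 ± δ)·bias(Ψ)` with `δ = ε/4`, the output `v` satisfies
`v ≤ val_Ψ` and `v ≥ (√2/2 − ε)·val_Ψ`. (When `m₂ = 0`, `B²/m₂` is `0` by the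
convention that division by zero is zero.) -/
theorem alg_max2or_correct {n : ℕ} (Ψ : List (OrClause n))
    (ε δ B v : ℝ) (hε : ε ∈ Set.Ioo (0 : ℝ) 0.01) (hδ : δ = ε / 4)
    (hB1 : (1 - δ) * bias Ψ ≤ B) (hB2 : B ≤ (1 + δ) * bias Ψ)
    (hv : v = if B ≤ (1 - δ) * (numTwo Ψ : ℝ)
              then (1 - δ) ^ 2 * (2 * (numOne Ψ : ℝ) + 3 * (numTwo Ψ : ℝ)
                      + B ^ 2 / (numTwo Ψ : ℝ)) / 4
              else (1 - δ) * ((numOne Ψ : ℝ) + (numTwo Ψ : ℝ) + B) / 2) :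
    v ≤ (maxVal Ψ : ℝ) ∧ (Real.sqrt 2 / 2 - ε) * (maxVal Ψ : ℝ) ≤ v := by
  obtain rfl : ε = 4 * δ := by rw [hδ]; ring
  obtain ⟨hε₀, hε₁⟩ := hε
  have hm₁ : (0 : ℝ) ≤ numOne Ψ := Nat.cast_nonneg _
  have hm₂ : (0 : ℝ) ≤ numTwo Ψ := Nat.cast_nonneg _
  have hb := bias_nonneg Ψ
  have hU₁ := maxVal_le_numOne_add_numTwo Ψ
  have hU₂ := two_mul_maxVal_le Ψ
  split_ifs at hv with hB <;> subst hv
  · have hbm : bias Ψ ≤ numTwo Ψ := le_of_mul_le_mul_left (hB1.trans hB) (by linarith)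
    obtain ⟨hlo, hhi⟩ := quadratic_sandwich hm₁ hm₂ hb (by linarith) (by linarith) hB1 hB2
    exact approx_of_sandwich (by linarith) (quadratic_le_maxVal hbm)
      (sqrt_two_half_mul_le_quadratic hb hbm hU₁ hU₂) hlo hhi
  · have hbm : 99 * (numTwo Ψ : ℝ) ≤ 100 * bias Ψ := by nlinarith
    have hL₀ := randomized_majority_le_maxVal (Ψ := Ψ) le_rfl (by norm_num)
    have hL₁ := randomized_majority_le_maxVal (Ψ := Ψ) (t := 1 / 2) (by norm_num) le_rfl
    obtain ⟨hlo, hhi⟩ := linear_sandwich hm₁ hm₂ hb (by linarith) (by linarith) hB1 hB2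
    exact approx_of_sandwich (by linarith) (by linarith)
      (sqrt_two_half_mul_le_linear hm₂ hbm (by linarith) hU₁ hU₂) hlo hhi
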